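/- For n ≥ 3, G_1(n) = G_1(n-2) + G_1(n-1) + 2(n-1)·G_1(n-1), where G_1(m) counts partitions of labeled sets into m blocks of size at most 2 summed over the ground-set size. -/

import Mathlib

/-- `E σ n k` is the number of partitions of `{1,…,k}` into exactly `n` blocks,
each of size between `1` and `σ+1`. -/
noncomputable def E (σ n k : ℕ) : ℕ :=
  Nat.card {P : Finpartition (Finset.univ : Finset (Fin k)) //
    P.parts.card = n ∧ ∀ b ∈ P.parts, b.card ≤ σ + 1}

/-- `G₁ m = Σ_{k=m}^{2m} E₁(m,k)`. -/
noncomputable def G1 (m : ℕ) : ℕ := ∑ k ∈ Finset.Icc m (2 * m), E 1 m k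

/-!
Classifying the partitions of a set `s ∋ a` by the block containing `a`, which is `{a}` or
`{a, x}`, gives `E(n+1, k+1) = E(n, k) + k E(n, k-1)`; summed over `k` this is
`G₁(n+1) = G₁(n) + W(n)` with `W(n) = Σₖ (k+1) E(n, k)`. A partition counted by `E(n+1, k+1)`
has `2(n+1) - (k+1)` singletons, and removing one of them leaves a partition counted by
`E(n, k)`; hence `(2n+1-k) E(n+1, k+1) = (k+1) E(n, k)`, which sums to
`W(n+1) + W(n) = (2n+3) G₁(n+1)`. Eliminating `W` gives the recurrence.
-/

open Finset

namespace Finpartition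

variable {α : Type*} [GeneralizedBooleanAlgebra α] [DecidableEq α] {a b : α}

lemma parts_avoid_of_mem (P : Finpartition a) (hb : b ∈ P.parts) :
    (P.avoid b).parts = P.parts.erase b := by
  ext c
  rw [mem_avoid, mem_erase]
  constructor
  · rintro ⟨d, hd, hdb, rfl⟩
    have hdb' : d ≠ b := by rintro rfl; exact hdb le_rfl
    have hdisj : Disjoint d b := P.disjoint hd hb hdb'
    rw [hdisj.sdiff_eq_left]
    exact ⟨hdb', hd⟩
  · rintro ⟨hcb, hc⟩
    have hdisj : Disjoint c b := P.disjoint hc hb hcb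
    exact ⟨c, hc, fun hle => P.ne_bot hc (hdisj.eq_bot_of_le hle), hdisj.sdiff_eq_left⟩

end Finpartition

variable {α : Type*} [DecidableEq α]

def pairPartitions (s : Finset α) (n : ℕ) : Finset (Finpartition s) :=
  {P | #P.parts = n ∧ ∀ b ∈ P.parts, #b ≤ 2}

lemma card_filter_mem_parts_pairPartitions {s b : Finset α} (hbs : b ⊆ s) (hb : b.Nonempty)
    (hb₂ : #b ≤ 2) (n : ℕ) :
    #{P ∈ pairPartitions s (n + 1) | b ∈ P.parts} = #(pairPartitions (s \ b) n) := by
  have hb' : b ≠ ⊥ := hb.ne_empty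
  have hnot (Q : Finpartition (s \ b)) : b ∉ Q.parts := fun h =>
    hb' (sdiff_disjoint.symm.eq_bot_of_le (Q.le h))
  refine card_nbij' (fun P => P.avoid b)
    (fun Q => Q.extend hb' sdiff_disjoint (sdiff_sup_cancel hbs)) ?_ ?_ ?_ ?_
  · intro P hP
    simp only [pairPartitions, coe_filter, mem_filter, mem_univ, true_and, Set.mem_ofPred_eq]
      at hP ⊢
    obtain ⟨⟨hcard, hsmall⟩, hbP⟩ := hP
    rw [P.parts_avoid_of_mem hbP, card_erase_of_mem hbP, hcard]
    exact ⟨rfl, fun c hc => hsmall c (mem_of_mem_erase hc)⟩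
  · intro Q hQ
    simp only [pairPartitions, coe_filter, mem_filter, mem_univ, true_and, Set.mem_ofPred_eq]
      at hQ ⊢
    obtain ⟨hcard, hsmall⟩ := hQ
    refine ⟨⟨by rw [Finpartition.card_extend, hcard], ?_⟩, mem_insert_self _ _⟩
    simp only [Finpartition.extend_parts, mem_insert, forall_eq_or_imp]
    exact ⟨hb₂, hsmall⟩
  · intro P hP
    simp only [coe_filter, Set.mem_ofPred_eq] at hP
    ext1
    simp [P.parts_avoid_of_mem hP.2, insert_erase hP.2]
  · intro Q _
    ext1
    have hbQ : b ∈ (Q.extend hb' sdiff_disjoint (sdiff_sup_cancel hbs)).parts := by simp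
    rw [Finpartition.parts_avoid_of_mem _ hbQ, Finpartition.extend_parts, erase_insert (hnot Q)]

lemma mem_insert_singleton_image_pair {s b : Finset α} {a : α} (hab : a ∈ b) (hbs : b ⊆ s)
    (hb₂ : #b ≤ 2) : b ∈ insert {a} ((s.erase a).image fun x => {a, x}) := by
  rw [mem_insert, mem_image, ← insert_erase hab]
  rcases (b.erase a).eq_empty_or_nonempty with h | ⟨x, hx⟩
  · left
    rw [h]
    rfl
  · right
    have hcard : #(b.erase a) ≤ 1 := by rw [card_erase_of_mem hab]; omega
    have hsingle : b.erase a = {x} :=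
      eq_singleton_iff_unique_mem.2 ⟨hx, fun y hy => card_le_one.1 hcard y hy x hx⟩
    exact ⟨x, erase_subset_erase a hbs hx, by rw [hsingle]⟩

lemma card_pairPartitions_succ {s : Finset α} {a : α} (ha : a ∈ s) (n : ℕ) :
    #(pairPartitions s (n + 1)) =
      #(pairPartitions (s.erase a) n) + ∑ x ∈ s.erase a, #(pairPartitions (s \ {a, x}) n) := by
  have hfiber (b : Finset α) (hab : a ∈ b) (hbs : b ⊆ s) (hb₂ : #b ≤ 2) :
      #{P ∈ pairPartitions s (n + 1) | P.part a = b} = #(pairPartitions (s \ b) n) := by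
    rw [← card_filter_mem_parts_pairPartitions hbs ⟨a, hab⟩ hb₂]
    congr 1
    refine filter_congr fun P _ => ⟨fun h => ?_, fun h => P.part_eq_of_mem h hab⟩
    rw [← h]
    exact P.part_mem.2 ha
  have hblock : ∀ P ∈ pairPartitions s (n + 1),
      P.part a ∈ insert {a} ((s.erase a).image fun x => {a, x}) := by
    intro P hP
    exact mem_insert_singleton_image_pair (P.mem_part_self.2 ha) (P.part_subset a)
      ((mem_filter.1 hP).2.2 _ (P.part_mem.2 ha))
  have hpair_inj : Set.InjOn (fun x => ({a, x} : Finset α)) (s.erase a) := by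
    intro x hx y hy hxy
    have hx' : x ∈ ({a, y} : Finset α) := by
      rw [← show ({a, x} : Finset α) = {a, y} from hxy]
      exact mem_insert_of_mem (mem_singleton_self x)
    simpa [ne_of_mem_erase hx] using hx'
  have hsingle_notMem : ({a} : Finset α) ∉ (s.erase a).image fun x => {a, x} := by
    simp only [mem_image, not_exists, not_and]
    intro x hx hxa
    have hx' : x ∈ ({a} : Finset α) := hxa ▸ mem_insert_of_mem (mem_singleton_self x)
    exact ne_of_mem_erase hx (mem_singleton.1 hx')
  rw [card_eq_sum_card_fiberwise hblock, sum_insert hsingle_notMem, sum_image hpair_inj,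
    hfiber {a} (mem_singleton_self a) (singleton_subset_iff.2 ha) (by simp),
    sdiff_singleton_eq_erase]
  congr 1
  refine sum_congr rfl fun x hx => hfiber _ (mem_insert_self a _) ?_ card_le_two
  exact insert_subset ha (singleton_subset_iff.2 (mem_of_mem_erase hx))

-- `k - 1` truncates only at `k = 0`, where its coefficient `k` vanishes.
def pairPartitionCount : ℕ → ℕ → ℕ
  | 0, 0 => 1
  | 0, _ + 1 => 0
  | _ + 1, 0 => 0
  | n + 1, k + 1 => pairPartitionCount n k + k * pairPartitionCount n (k - 1)

lemma card_pairPartitions_empty (n : ℕ) :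
    #(pairPartitions (∅ : Finset α) n) = pairPartitionCount n 0 := by
  have hparts (P : Finpartition (∅ : Finset α)) : P.parts = ∅ := P.parts_eq_empty_iff.2 rfl
  cases n with
  | zero =>
    rw [pairPartitionCount, card_eq_one]
    refine ⟨Finpartition.empty _, eq_singleton_iff_unique_mem.2 ⟨by simp [pairPartitions],
      fun P _ => Finpartition.ext (by simp [hparts])⟩⟩
  | succ n =>
    rw [pairPartitionCount, card_eq_zero, pairPartitions, filter_eq_empty_iff]
    simp [hparts]

lemma pairPartitions_zero_of_nonempty {s : Finset α} (hs : s.Nonempty) :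
    pairPartitions s 0 = ∅ := by
  rw [pairPartitions, filter_eq_empty_iff]
  rintro P - ⟨hcard, -⟩
  exact hs.ne_empty (P.parts_eq_empty_iff.1 (card_eq_zero.1 hcard))

theorem card_pairPartitions (s : Finset α) (n : ℕ) :
    #(pairPartitions s n) = pairPartitionCount n #s := by
  induction s using Finset.strongInduction generalizing n with | H s ih =>
  rcases s.eq_empty_or_nonempty with rfl | ⟨a, ha⟩
  · exact card_pairPartitions_empty n
  obtain ⟨k, hk⟩ : ∃ k, #s = k + 1 := ⟨#s - 1, by have := card_pos.2 ⟨a, ha⟩; omega⟩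
  cases n with
  | zero => rw [pairPartitions_zero_of_nonempty ⟨a, ha⟩, hk]; rfl
  | succ n =>
    have hpair (x : α) (hx : x ∈ s.erase a) :
        #(pairPartitions (s \ {a, x}) n) = pairPartitionCount n (k - 1) := by
      have hsub : {a, x} ⊆ s := insert_subset ha (singleton_subset_iff.2 (mem_of_mem_erase hx))
      rw [ih _ (sdiff_ssubset hsub (insert_nonempty a _)), card_sdiff_of_subset hsub,
        card_pair (ne_of_mem_erase hx).symm, hk]
      rfl
    rw [card_pairPartitions_succ ha, ih _ (erase_ssubset ha), sum_congr rfl hpair, sum_const,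
      card_erase_of_mem ha, hk, smul_eq_mul, pairPartitionCount]
    rfl

theorem E_one_eq_pairPartitionCount (n k : ℕ) : E 1 n k = pairPartitionCount n k := by
  have h := card_pairPartitions (univ : Finset (Fin k)) n
  rw [card_univ, Fintype.card_fin] at h
  rw [← h, E, Nat.card_eq_fintype_card, Fintype.card_subtype, pairPartitions]
  convert rfl

lemma pairPartitionCount_eq_zero_of_lt {n k : ℕ} (h : k < n) : pairPartitionCount n k = 0 := by
  induction n generalizing k with
  | zero => omega
  | succ n ih =>
    cases k with
    | zero => rfl
    | succ k => rw [pairPartitionCount, ih (by omega), ih (by omega), mul_zero, add_zero]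

lemma pairPartitionCount_eq_zero_of_two_mul_lt {n k : ℕ} (h : 2 * n < k) :
    pairPartitionCount n k = 0 := by
  induction n generalizing k with
  | zero => obtain ⟨k, rfl⟩ : ∃ j, k = j + 1 := ⟨k - 1, by omega⟩; rfl
  | succ n ih =>
    obtain ⟨k, rfl⟩ : ∃ j, k = j + 1 := ⟨k - 1, by omega⟩
    rw [pairPartitionCount, ih (by omega), ih (by omega), mul_zero, add_zero]

lemma two_mul_succ_mul_pairPartitionCount (n k : ℕ) :
    2 * (n + 1) * pairPartitionCount (n + 1) (k + 1) =
      (k + 1) * (pairPartitionCount (n + 1) (k + 1) + pairPartitionCount n k) := by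
  induction n generalizing k with
  | zero => rcases k with _ | _ | k <;> simp [pairPartitionCount]
  | succ n ih =>
    rcases k with _ | _ | j
    · simp [pairPartitionCount]
    · cases n <;> simp [pairPartitionCount]
    · have ih₁ := ih (j + 1)
      have ih₀ := ih j
      have hX : pairPartitionCount (n + 2) (j + 2 + 1) =
          pairPartitionCount (n + 1) (j + 2) + (j + 2) * pairPartitionCount (n + 1) (j + 1) := rfl
      have ha : pairPartitionCount (n + 1) (j + 2) =
          pairPartitionCount n (j + 1) + (j + 1) * pairPartitionCount n j := rfl
      zify at ih₁ ih₀ hX ha ⊢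
      linear_combination
        (2 * (n : ℤ) + 1 - j) * hX + ih₁ + ((j : ℤ) + 2) * ih₀ - ((j : ℤ) + 2) * ha

lemma sum_range_mul_pairPartitionCount (g : ℕ → ℕ) {m N : ℕ} (hN : 2 * m < N) :
    ∑ k ∈ range N, g k * pairPartitionCount m k =
      ∑ k ∈ range (2 * m + 1), g k * pairPartitionCount m k := by
  refine (sum_subset (range_subset_range.2 (by omega)) fun k _ hk => ?_).symm
  rw [pairPartitionCount_eq_zero_of_two_mul_lt (by simpa using hk), mul_zero]

lemma G1_eq_sum_range (m : ℕ) : G1 m = ∑ k ∈ range (2 * m + 1), pairPartitionCount m k := by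
  rw [G1]
  simp_rw [E_one_eq_pairPartitionCount]
  refine sum_subset (fun k hk => by simp at hk ⊢; omega) fun k hk hk' => ?_
  exact pairPartitionCount_eq_zero_of_lt (by simp at hk hk'; omega)

def weightedG1 (m : ℕ) : ℕ := ∑ k ∈ range (2 * m + 1), (k + 1) * pairPartitionCount m k

lemma G1_succ_eq_sum_range (m : ℕ) :
    G1 (m + 1) = ∑ k ∈ range (2 * m + 2), pairPartitionCount (m + 1) (k + 1) := by
  rw [G1_eq_sum_range, show 2 * (m + 1) + 1 = 2 * m + 2 + 1 by ring, sum_range_succ']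
  rfl

lemma G1_succ (m : ℕ) : G1 (m + 1) = G1 m + weightedG1 m := by
  have hG : ∑ k ∈ range (2 * m + 2), pairPartitionCount m k = G1 m := by
    simpa [G1_eq_sum_range] using
      sum_range_mul_pairPartitionCount (fun _ => 1) (show 2 * m < 2 * m + 2 by omega)
  have hW : ∑ k ∈ range (2 * m + 2), k * pairPartitionCount m (k - 1) = weightedG1 m := by
    rw [sum_range_succ', zero_mul, add_zero]
    rfl
  calc G1 (m + 1) = ∑ k ∈ range (2 * m + 2), pairPartitionCount (m + 1) (k + 1) :=
        G1_succ_eq_sum_range m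
    _ = ∑ k ∈ range (2 * m + 2),
          (pairPartitionCount m k + k * pairPartitionCount m (k - 1)) := rfl
    _ = G1 m + weightedG1 m := by rw [sum_add_distrib, hG, hW]

lemma weightedG1_succ_add (m : ℕ) :
    weightedG1 (m + 1) + weightedG1 m = (2 * m + 3) * G1 (m + 1) := by
  have hG := G1_succ_eq_sum_range m
  have hW : weightedG1 (m + 1) =
      ∑ k ∈ range (2 * m + 2), (k + 1) * pairPartitionCount (m + 1) (k + 1) + G1 (m + 1) := by
    rw [weightedG1, show 2 * (m + 1) + 1 = 2 * m + 2 + 1 by ring, sum_range_succ', hG,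
      ← sum_add_distrib]
    simp only [add_mul, one_mul]
    rfl
  have hW₀ : ∑ k ∈ range (2 * m + 2), (k + 1) * pairPartitionCount m k = weightedG1 m :=
    sum_range_mul_pairPartitionCount _ (by omega)
  have hsum := sum_congr rfl fun k (_ : k ∈ range (2 * m + 2)) =>
    two_mul_succ_mul_pairPartitionCount m k
  simp only [← mul_sum, mul_add, sum_add_distrib, ← hG, hW₀] at hsum
  zify at hsum hW ⊢
  linear_combination hW - hsum

theorem stmt_10 (n : ℕ) (hn : 3 ≤ n) :
    G1 n = G1 (n - 2) + G1 (n - 1) + 2 * (n - 1) * G1 (n - 1) := by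
  obtain ⟨m, rfl⟩ : ∃ m, n = m + 2 := ⟨n - 2, by omega⟩
  rw [show m + 2 - 2 = m by omega, show m + 2 - 1 = m + 1 by omega]
  have h₂ := G1_succ (m + 1)
  have h₁ := G1_succ m
  have hW := weightedG1_succ_add m
  zify at h₂ h₁ hW ⊢
  linear_combination h₂ + h₁ + hW
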